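/- arXiv:2403.17563 — 3 statements merged into one kernel-verified Lean document; each statement's English description precedes it below -/
import Mathlib

section
/- Let β₁, β₂ > 0 be real numbers and −1 < D < C ≤ 1 real numbers satisfying ν₀(β₁ + β₂ν₁)·(1 − D²) ≥ (C − D)(1 + |D|), where ν₀ = √(1 − sin²1) and ν₁ = −sin 2/(1 + cos 2). Let p be analytic on the open unit disk 𝔻 with p(0) = 1, and suppose that for every z ∈ 𝔻 the value 1 + β₁·z·p′(z) + β₂·z²·p″(z) lies in the open disk {w ∈ ℂ : |w − (1 − CD)/(1 − D²)| < (C − D)/(1 − D²)}. Then for every z ∈ 𝔻, p(z) ∈ {1 + sin w : w ∈ 𝔻}, i.e. p(z) ≺ 1 + sin z. -/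
/-!
Write `H = β₁ p' + β₂ z p''`. The hypothesis puts `1 + z H(z)` in the Janowski disk, whose points lie
within `M = (C - D)(1 + |D|)/(1 - D²)` of `1`, so the Schwarz lemma gives `‖H‖ ≤ M`. Integrating the
Euler-type equation `(β₁/β₂) p' + z p'' = H/β₂` along rays with the integrating factor `u ^ (β₁/β₂)`
gives `‖p'‖ ≤ M/β₁`, hence `‖p z - 1‖ ≤ M/β₁`. Since `ν₀ (β₁ + β₂ ν₁) = β₁ cos 1 - β₂ sin 1`, the
hypothesis on the parameters yields `M/β₁ < cos 1 < sin 1`. Finally `sin` maps the unit disk onto a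
set containing the disk of radius `sin 1`: every value is taken on the strip `|Re w| ≤ π/2`, where
`‖sin w‖² = sin² x + sinh² y < sin² 1` forces `x² + y² < 1`.
-/

open Metric

noncomputable def nu0 : ℝ := Real.sqrt (1 - Real.sin 1 ^ 2)

noncomputable def nu1 : ℝ := -Real.sin 2 / (1 + Real.cos 2)

theorem norm_sub_one_lt_of_norm_sub_lt {C D : ℝ} (hD : 1 - D ^ 2 ≠ 0) {w : ℂ}
    (hw : ‖w - (((1 - C * D) / (1 - D ^ 2) : ℝ) : ℂ)‖ < (C - D) / (1 - D ^ 2)) :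
    ‖w - 1‖ < (C - D) * (1 + |D|) / (1 - D ^ 2) := by
  set ρ := (C - D) / (1 - D ^ 2)
  have hρ : 0 < ρ := (norm_nonneg _).trans_lt hw
  have hcenter : (1 - C * D) / (1 - D ^ 2) - 1 = -D * ρ := by
    simp only [ρ]; field_simp; ring
  calc ‖w - 1‖ = ‖(w - (((1 - C * D) / (1 - D ^ 2) : ℝ) : ℂ))
        + (((1 - C * D) / (1 - D ^ 2) - 1 : ℝ) : ℂ)‖ := by push_cast; ring_nf
    _ ≤ ‖w - (((1 - C * D) / (1 - D ^ 2) : ℝ) : ℂ)‖ + |D| * ρ := by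
      refine (norm_add_le _ _).trans (le_of_eq ?_)
      rw [Complex.norm_real, hcenter, Real.norm_eq_abs, abs_mul, abs_neg, abs_of_pos hρ]
    _ < ρ + |D| * ρ := by linarith
    _ = (C - D) * (1 + |D|) / (1 - D ^ 2) := by simp only [ρ]; ring

section

open Set

variable {E : Type*} [NormedAddCommGroup E] [NormedSpace ℂ E]

theorem norm_le_of_forall_norm_smul_le {H : ℂ → E} {M : ℝ} (hH : DifferentiableOn ℂ H (ball 0 1))
    (hM : ∀ w ∈ ball (0 : ℂ) 1, ‖w • H w‖ ≤ M) {w : ℂ} (hw : w ∈ ball (0 : ℂ) 1) :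
    ‖H w‖ ≤ M := by
  have hmaps : MapsTo (fun w : ℂ => w • H w) (ball 0 1) (closedBall ((0 : ℂ) • H 0) M) :=
    fun w hw => by simpa using hM w hw
  have hschwarz := Complex.norm_dslope_le_div_of_mapsTo_ball (f := fun w : ℂ => w • H w)
    (differentiableOn_id.smul hH) hmaps hw
  rw [div_one] at hschwarz
  convert hschwarz using 2
  rcases eq_or_ne w 0 with rfl | hw0
  · have hderiv : HasDerivAt (fun w : ℂ => w • H w) (H 0) 0 := by
      simpa using (hasDerivAt_id' (0 : ℂ)).fun_smul
        (hH.differentiableAt (isOpen_ball.mem_nhds hw)).hasDerivAt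
    rw [dslope_same, hderiv.deriv]
  · simpa using (dslope_sub_smul_of_ne H hw0).symm

theorem ofReal_mul_mem_ball_zero_one {z : ℂ} (hz : z ∈ ball (0 : ℂ) 1) {u : ℝ}
    (hu : u ∈ Icc (0 : ℝ) 1) : (u : ℂ) * z ∈ ball (0 : ℂ) 1 := by
  rw [mem_ball_zero_iff] at hz ⊢
  rw [norm_mul, Complex.norm_real, Real.norm_of_nonneg hu.1]
  nlinarith [hu.2, norm_nonneg z]

theorem hasDerivAt_rpow_smul_comp_ofReal_mul {h : ℂ → E} {a u : ℝ} {z : ℂ} (hu : 0 < u)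
    (hh : DifferentiableAt ℂ h (u * z)) :
    HasDerivAt (fun u : ℝ => u ^ a • h (u * z))
      (u ^ (a - 1) • (a • h (u * z) + ((u : ℂ) * z) • deriv h (u * z))) u := by
  have hline : HasDerivAt (fun u : ℝ => (u : ℂ) * z) z u := by
    simpa using ((hasDerivAt_id u).ofReal_comp).mul_const z
  refine ((Real.hasDerivAt_rpow_const (p := a) (Or.inl hu.ne')).smul
    (hh.hasDerivAt.scomp u hline)).congr_deriv ?_
  have hpow : u ^ a = u ^ (a - 1) * u := by
    rw [← Real.rpow_add_one hu.ne']; ring_nf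
  simp only [Function.comp_apply, hpow, ← Complex.coe_smul]
  push_cast
  module

theorem norm_le_div_of_norm_smul_add_smul_deriv_le [CompleteSpace E] {h : ℂ → E} {a K : ℝ}
    (ha : 0 < a) (hh : AnalyticOnNhd ℂ h (ball 0 1))
    (hK : ∀ w ∈ ball (0 : ℂ) 1, ‖a • h w + w • deriv h w‖ ≤ K) {z : ℂ}
    (hz : z ∈ ball (0 : ℂ) 1) : ‖h z‖ ≤ K / a := by
  set L : ℂ → E := fun w => a • h w + w • deriv h w
  have hseg := fun u (hu : u ∈ Icc (0 : ℝ) 1) => ofReal_mul_mem_ball_zero_one hz hu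
  have hderiv : ∀ u ∈ Ioo (0 : ℝ) 1,
      HasDerivAt (fun u : ℝ => u ^ a • h (u * z)) (u ^ (a - 1) • L (u * z)) u := fun u hu =>
    hasDerivAt_rpow_smul_comp_ofReal_mul hu.1
      (hh _ (hseg u (Ioo_subset_Icc_self hu))).differentiableAt
  have hLcont : ContinuousOn (fun u : ℝ => L (u * z)) (Icc 0 1) := by
    have : ContinuousOn L (ball 0 1) :=
      (continuousOn_const.smul hh.continuousOn).add (continuousOn_id.smul hh.deriv.continuousOn)
    exact this.comp (by fun_prop) hseg
  have hint : IntervalIntegrable (fun u : ℝ => u ^ (a - 1) • L (u * z)) MeasureTheory.volume 0 1 :=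
    (intervalIntegral.intervalIntegrable_rpow' (by linarith)).smul_continuousOn
      (by rwa [uIcc_of_le zero_le_one])
  have hcont : ContinuousOn (fun u : ℝ => u ^ a • h (u * z)) (Icc 0 1) :=
    (Real.continuous_rpow_const ha.le).continuousOn.smul (hh.continuousOn.comp (by fun_prop) hseg)
  have hFTC := intervalIntegral.integral_eq_sub_of_hasDerivAt_of_le zero_le_one hcont hderiv hint
  simp only [Real.one_rpow, Complex.ofReal_one, one_mul, one_smul, Real.zero_rpow ha.ne',
    zero_smul, sub_zero] at hFTC
  calc ‖h z‖ = ‖∫ u in (0 : ℝ)..1, u ^ (a - 1) • L (u * z)‖ := by rw [hFTC]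
    _ ≤ ∫ u in (0 : ℝ)..1, K * u ^ (a - 1) := by
      refine intervalIntegral.norm_integral_le_of_norm_le zero_le_one
        (Filter.Eventually.of_forall fun u hu => ?_)
        ((intervalIntegral.intervalIntegrable_rpow' (by linarith)).const_mul K)
      rw [norm_smul, Real.norm_of_nonneg (Real.rpow_nonneg hu.1.le _), mul_comm]
      exact mul_le_mul_of_nonneg_right (hK _ (hseg u (Ioc_subset_Icc_self hu)))
        (Real.rpow_nonneg hu.1.le _)
    _ = K / a := by
      rw [intervalIntegral.integral_const_mul, integral_rpow (Or.inl (by linarith))]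
      simp [Real.zero_rpow ha.ne', div_eq_mul_inv]

end

theorem norm_deriv_le_of_norm_mul_deriv_add_sq_mul_deriv_deriv_le {p : ℂ → ℂ} {β₁ β₂ M : ℝ}
    (hβ₁ : 0 < β₁) (hβ₂ : 0 < β₂) (hp : AnalyticOnNhd ℂ p (ball 0 1))
    (hM : ∀ w ∈ ball (0 : ℂ) 1,
      ‖(β₁ : ℂ) * w * deriv p w + (β₂ : ℂ) * w ^ 2 * deriv (deriv p) w‖ ≤ M)
    {z : ℂ} (hz : z ∈ ball (0 : ℂ) 1) : ‖deriv p z‖ ≤ M / β₁ := by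
  set H : ℂ → ℂ := fun w => β₁ * deriv p w + β₂ * w * deriv (deriv p) w
  have hHdiff : DifferentiableOn ℂ H (ball 0 1) :=
    ((differentiableOn_const _).mul hp.deriv.differentiableOn).add
      (((differentiableOn_const _).mul differentiableOn_id).mul hp.deriv.deriv.differentiableOn)
  have hH : ∀ w ∈ ball (0 : ℂ) 1, ‖H w‖ ≤ M := by
    refine fun w hw => norm_le_of_forall_norm_smul_le hHdiff (fun v hv => ?_) hw
    have hsmul : v • H v = β₁ * v * deriv p v + β₂ * v ^ 2 * deriv (deriv p) v := by
      simp only [H, smul_eq_mul]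
      ring
    exact hsmul ▸ hM v hv
  convert norm_le_div_of_norm_smul_add_smul_deriv_le (div_pos hβ₁ hβ₂) hp.deriv (K := M / β₂)
    (fun v hv => ?_) hz using 1
  · field_simp
  · have hEuler : (β₁ / β₂) • deriv p v + v • deriv (deriv p) v = (β₂ : ℂ)⁻¹ * H v := by
      simp only [H, Complex.real_smul, smul_eq_mul]
      push_cast
      field_simp [Complex.ofReal_ne_zero.2 hβ₂.ne']
    rw [hEuler, norm_mul, norm_inv, Complex.norm_real, Real.norm_of_nonneg hβ₂.le, inv_mul_eq_div]
    exact div_le_div_of_nonneg_right (hH v hv) hβ₂.le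

theorem Complex.sq_norm_sin (w : ℂ) :
    ‖Complex.sin w‖ ^ 2 = Real.sin w.re ^ 2 + Real.sinh w.im ^ 2 := by
  rw [Complex.sin_eq, ← Complex.ofReal_sin, ← Complex.ofReal_cosh, ← Complex.ofReal_cos,
    ← Complex.ofReal_sinh, ← Complex.ofReal_mul, ← Complex.ofReal_mul, Complex.sq_norm,
    Complex.normSq_add_mul_I]
  linear_combination (Real.sin w.re ^ 2) * Real.cosh_sq w.im
    + (Real.sinh w.im ^ 2) * Real.cos_sq' w.re

theorem Complex.exists_abs_re_le_pi_div_two_sin_eq (ζ : ℂ) :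
    ∃ w : ℂ, |w.re| ≤ Real.pi / 2 ∧ Complex.sin w = ζ := by
  obtain ⟨w, rfl⟩ := Complex.sin_surjective ζ
  -- Shift `w.re` by a multiple of `2π` into `(-π/2, 3π/2]`, then reflect by `w ↦ π - w` if needed.
  set k := toIocDiv Real.two_pi_pos (-(Real.pi / 2)) w.re
  have hmem := toIocMod_mem_Ioc Real.two_pi_pos (-(Real.pi / 2)) w.re
  rw [← self_sub_toIocDiv_zsmul] at hmem
  set w' := w - k * (2 * Real.pi)
  have hre : w'.re = w.re - k • (2 * Real.pi) := by simp [w']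
  have hsin : Complex.sin w' = Complex.sin w := Complex.sin_sub_int_mul_two_pi w k
  rw [← hre] at hmem
  by_cases hw' : w'.re ≤ Real.pi / 2
  · exact ⟨w', abs_le.2 ⟨hmem.1.le, hw'⟩, hsin⟩
  · refine ⟨Real.pi - w', abs_le.2 ⟨?_, ?_⟩, by rw [Complex.sin_pi_sub, hsin]⟩ <;>
      simp <;> linarith [hmem.2]

theorem Real.cos_one_lt_sin_one : Real.cos 1 < Real.sin 1 := by
  linarith [Real.cos_one_le, Real.sin_gt_sub_cube (x := 1) one_pos]

theorem sq_add_sq_lt_one_of_sin_sq_add_sinh_sq_lt {x y : ℝ} (hx : |x| ≤ Real.pi / 2)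
    (h : Real.sin x ^ 2 + Real.sinh y ^ 2 < Real.sin 1 ^ 2) : x ^ 2 + y ^ 2 < 1 := by
  wlog hx0 : 0 ≤ x generalizing x
  · simpa using this (x := -x) (by simpa using hx) (by simpa using h) (by linarith)
  rw [abs_of_nonneg hx0] at hx
  have hy : y ^ 2 ≤ Real.sinh y ^ 2 := by
    rw [← sq_abs (Real.sinh y), Real.abs_sinh, ← sq_abs y]
    exact pow_le_pow_left₀ (abs_nonneg y) (Real.self_le_sinh_iff.2 (abs_nonneg y)) 2
  have hsin0 : 0 ≤ Real.sin x := Real.sin_nonneg_of_nonneg_of_le_pi hx0 (by linarith [Real.pi_pos])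
  have hsin1 : 0 < Real.sin 1 := by linarith [Real.cos_one_pos, Real.cos_one_lt_sin_one]
  have hx1 : x < 1 := by
    by_contra! h1
    have := Real.sin_le_sin_of_le_of_le_pi_div_two (by linarith [Real.pi_pos]) hx h1
    nlinarith [sq_nonneg (Real.sinh y)]
  have hsinx : Real.sin x ≤ Real.sin 1 :=
    Real.sin_le_sin_of_le_of_le_pi_div_two (by linarith [Real.pi_pos])
      (by linarith [Real.pi_gt_three]) hx1.le
  have hlip : Real.sin 1 - Real.sin x ≤ 1 - x := by
    have := Real.abs_sin_sub_sin_le 1 x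
    rw [abs_of_pos (by linarith : (0 : ℝ) < 1 - x)] at this
    exact (le_abs_self _).trans this
  have hfactor : (x - Real.sin x) * (x + Real.sin x) ≤ (1 - Real.sin 1) * (1 + Real.sin 1) :=
    mul_le_mul (by linarith) (by linarith) (by linarith) (by linarith [Real.sin_le_one 1])
  nlinarith

theorem Complex.exists_mem_ball_sin_eq {ζ : ℂ} (hζ : ‖ζ‖ < Real.sin 1) :
    ∃ w ∈ ball (0 : ℂ) 1, Complex.sin w = ζ := by
  obtain ⟨w, hre, rfl⟩ := Complex.exists_abs_re_le_pi_div_two_sin_eq ζ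
  refine ⟨w, ?_, rfl⟩
  have hsq : ‖Complex.sin w‖ ^ 2 < Real.sin 1 ^ 2 :=
    pow_lt_pow_left₀ hζ (norm_nonneg _) two_ne_zero
  rw [Complex.sq_norm_sin] at hsq
  have hw := sq_add_sq_lt_one_of_sin_sq_add_sinh_sq_lt hre hsq
  rw [mem_ball_zero_iff, ← sq_lt_one_iff₀ (norm_nonneg w), Complex.sq_norm, Complex.normSq_apply]
  nlinarith

theorem nu0_eq_cos_one : nu0 = Real.cos 1 := by
  rw [nu0, ← Real.cos_sq', Real.sqrt_sq Real.cos_one_pos.le]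

theorem nu1_eq_neg_tan_one : nu1 = -Real.tan 1 := by
  rw [nu1, Real.tan_eq_sin_div_cos, show (2 : ℝ) = 2 * 1 by norm_num, Real.sin_two_mul,
    Real.cos_two_mul]
  field_simp [Real.cos_one_pos.ne']
  ring

theorem nu0_mul_add_mul_nu1 (x y : ℝ) :
    nu0 * (x + y * nu1) = Real.cos 1 * x - Real.sin 1 * y := by
  rw [nu0_eq_cos_one, nu1_eq_neg_tan_one, Real.tan_eq_sin_div_cos]
  field_simp [Real.cos_one_pos.ne']
  ring

theorem stmt1 (β₁ β₂ : ℝ) (hβ₁ : 0 < β₁) (hβ₂ : 0 < β₂)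
    (C D : ℝ) (hD : -1 < D) (hDC : D < C) (hC : C ≤ 1)
    (hcond : nu0 * (β₁ + β₂ * nu1) * (1 - D ^ 2) ≥ (C - D) * (1 + |D|))
    (p : ℂ → ℂ) (hp : AnalyticOnNhd ℂ p (ball 0 1)) (hp0 : p 0 = 1)
    (hsub : ∀ z ∈ ball (0 : ℂ) 1,
      ‖(1 + (β₁ : ℂ) * z * deriv p z + (β₂ : ℂ) * z ^ 2 * deriv (deriv p) z) - (((1 - C * D) / (1 - D ^ 2) : ℝ) : ℂ)‖ < (C - D) / (1 - D ^ 2)) :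
    ∀ z ∈ ball (0 : ℂ) 1, ∃ w ∈ ball (0 : ℂ) 1, p z = 1 + Complex.sin w := by
  have hden : 0 < 1 - D ^ 2 := by nlinarith
  set M := (C - D) * (1 + |D|) / (1 - D ^ 2)
  have hM0 : 0 ≤ M := div_nonneg (mul_nonneg (by linarith) (by positivity)) hden.le
  have hMβ₁ : M / β₁ < Real.cos 1 := by
    rw [nu0_mul_add_mul_nu1] at hcond
    have hsin1 : 0 < Real.sin 1 := Real.cos_one_pos.trans Real.cos_one_lt_sin_one
    rw [div_lt_iff₀ hβ₁, div_lt_iff₀ hden]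
    nlinarith [mul_pos (mul_pos hsin1 hβ₂) hden]
  have hderiv : ∀ w ∈ ball (0 : ℂ) 1, ‖deriv p w‖ ≤ M / β₁ :=
    fun w => norm_deriv_le_of_norm_mul_deriv_add_sq_mul_deriv_deriv_le hβ₁ hβ₂ hp fun v hv => by
      simpa [add_assoc] using (norm_sub_one_lt_of_norm_sub_lt hden.ne' (hsub v hv)).le
  intro z hz
  have hmvt := (convex_ball (0 : ℂ) 1).norm_image_sub_le_of_norm_deriv_le
    (fun w hw => (hp w hw).differentiableAt) hderiv (mem_ball_self one_pos) hz
  obtain ⟨w, hw, hsin⟩ := Complex.exists_mem_ball_sin_eq (ζ := p z - 1) <| calc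
    ‖p z - 1‖ ≤ M / β₁ * ‖z‖ := by simpa [hp0] using hmvt
    _ ≤ M / β₁ := mul_le_of_le_one_right (by positivity) (mem_ball_zero_iff.1 hz).le
    _ < Real.sin 1 := hMβ₁.trans Real.cos_one_lt_sin_one
  exact ⟨w, hw, by rw [hsin]; ring⟩
end

section
/- Let β₁, β₂ > 0 be real numbers and −1 < D < C ≤ 1 real numbers satisfying (2β₁ − β₂)(1 − D²) ≥ 2√2·(C − D)(1 + |D|). Let p be analytic on the open unit disk 𝔻 with p(0) = 1, and suppose that for every z ∈ 𝔻 the value 1 + β₁·z·p′(z) + β₂·z²·p″(z) lies in the open disk {w ∈ ℂ : |w − (1 − CD)/(1 − D²)| < (C − D)/(1 − D²)}. Then for every z ∈ 𝔻, p(z) ∈ {1 + log(w + (1 + w²)^{1/2}) : w ∈ 𝔻}, i.e. p(z) ≺ 1 + sinh⁻¹ z. -/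
/-!
Put `q(z) = β₁ z p'(z) + β₂ z² p''(z)`. The Janowski disk lies in the disk of radius
`R = (C - D)(1 + |D|)/(1 - D²)` about `1`, so `‖q‖ ≤ R`, and since `q 0 = 0` the Schwarz lemma
gives `‖q z‖ ≤ R ‖z‖`. With `α = β₁/β₂`, the function `h = p'` satisfies
`z h' + α h = q(z)/(β₂ z)`, i.e. `(s^α h(s z))' = s^(α-1) q(s z)/(β₂ s z)`; integrating over
`s ∈ [0, 1]` gives `‖p'‖ ≤ R/β₁`, hence `‖p z - 1‖ ≤ R/β₁ < 1/√2 < 3/4`.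
Finally `‖sinh v‖ ≤ sinh ‖v‖ < 1` and `sinh⁻¹ (sinh v) = v` for `‖v‖ ≤ 3/4`, so `w = sinh (p z - 1)`.
-/

open Metric Set Filter Topology

theorem Complex.cosh_re (v : ℂ) : (cosh v).re = Real.cosh v.re * Real.cos v.im := by
  conv_lhs => rw [← re_add_im v, cosh_add, cosh_mul_I, sinh_mul_I]
  simp [cos_ofReal_re]

noncomputable def Complex.arsinh (w : ℂ) : ℂ := log (w + (1 + w ^ 2) ^ (1 / 2 : ℂ))

theorem Complex.arsinh_sinh {v : ℂ} (hv : |v.im| < Real.pi / 2) : arsinh (sinh v) = v := by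
  obtain ⟨him₁, him₂⟩ := abs_lt.1 hv
  have hcosh : 0 < (cosh v).re := by
    rw [cosh_re]
    exact mul_pos (Real.cosh_pos _) (Real.cos_pos_of_mem_Ioo ⟨him₁, him₂⟩)
  rw [arsinh, add_comm 1, ← cosh_sq, one_div, sq_cpow_two_inv hcosh, sinh_add_cosh,
    log_exp (by linarith [Real.pi_pos]) (by linarith [Real.pi_pos])]

theorem Complex.norm_sinh_le (v : ℂ) : ‖sinh v‖ ≤ Real.sinh ‖v‖ :=
  (hasSum_sinh v).norm_le_of_bounded (Real.hasSum_sinh ‖v‖) fun n => by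
    rw [norm_div, norm_pow, Complex.norm_natCast]

theorem Real.sinh_lt_one {x : ℝ} (hx : x ≤ 3 / 4) : sinh x < 1 := by
  have hexp := Real.exp_bound (x := 3 / 4) (by norm_num [abs_of_pos]) (n := 3) (by norm_num)
  have hexp_neg := Real.add_one_le_exp (-(3 / 4))
  norm_num [Finset.sum_range_succ, Nat.factorial, abs_of_pos] at hexp
  calc sinh x ≤ sinh (3 / 4) := sinh_le_sinh.2 hx
    _ < 1 := by
      rw [sinh_eq]
      linarith [(abs_le.1 hexp).2]

theorem Complex.exists_mem_ball_arsinh_eq {v : ℂ} (hv : ‖v‖ ≤ 3 / 4) :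
    ∃ w ∈ ball (0 : ℂ) 1, arsinh w = v := by
  refine ⟨sinh v, mem_ball_zero_iff.2 ((norm_sinh_le v).trans_lt (Real.sinh_lt_one hv)),
    arsinh_sinh ?_⟩
  linarith [abs_im_le_norm v, Real.pi_gt_three]

theorem norm_sub_one_lt_of_norm_sub_janowski_center_lt {C D : ℝ} {w : ℂ}
    (hw : ‖w - (((1 - C * D) / (1 - D ^ 2) : ℝ) : ℂ)‖ < (C - D) / (1 - D ^ 2)) :
    ‖w - 1‖ < (C - D) / (1 - D ^ 2) * (1 + |D|) := by
  set ρ := (C - D) / (1 - D ^ 2) with hρ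
  have hρ₀ : 0 < ρ := (norm_nonneg _).trans_lt hw
  have hcenter : (((1 - C * D) / (1 - D ^ 2) : ℝ) : ℂ) - 1 = ((-D * ρ : ℝ) : ℂ) := by
    have hD : 1 - D ^ 2 ≠ 0 := fun h => by simp [hρ, h] at hρ₀
    rw [← Complex.ofReal_one, ← Complex.ofReal_sub, hρ]
    congr 1
    field_simp
    ring
  calc ‖w - 1‖ ≤ ‖w - (((1 - C * D) / (1 - D ^ 2) : ℝ) : ℂ)‖
        + ‖(((1 - C * D) / (1 - D ^ 2) : ℝ) : ℂ) - 1‖ := norm_sub_le_norm_sub_add_norm_sub _ _ _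
    _ < ρ + |D| * ρ := by
        rw [hcenter, Complex.norm_real, Real.norm_eq_abs, abs_mul, abs_neg, abs_of_pos hρ₀]
        linarith
    _ = ρ * (1 + |D|) := by ring

theorem janowski_radius_div_le {β₁ β₂ C D : ℝ} (hβ₁ : 0 < β₁) (hβ₂ : 0 < β₂)
    (hD : -1 < D) (hDC : D < C) (hC : C ≤ 1)
    (hcond : (2 * β₁ - β₂) * (1 - D ^ 2) ≥ 2 * √2 * ((C - D) * (1 + |D|))) :
    (C - D) / (1 - D ^ 2) * (1 + |D|) / β₁ ≤ 3 / 4 := by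
  have hD2 : 0 < 1 - D ^ 2 := by nlinarith
  have hsqrt2 : (4 / 3 : ℝ) < √2 := by
    rw [Real.lt_sqrt (by norm_num)]
    norm_num
  rw [div_le_iff₀ hβ₁, div_mul_eq_mul_div, div_le_iff₀ hD2]
  nlinarith [mul_pos (sub_pos.2 hDC) (add_pos_of_pos_of_nonneg one_pos (abs_nonneg D))]

theorem hasDerivAt_rpow_smul_comp_smul {h : ℂ → ℂ} {α s : ℝ} {z : ℂ} (hs : s ≠ 0)
    (hh : DifferentiableAt ℂ h (s • z)) :
    HasDerivAt (fun t : ℝ => t ^ α • h (t • z))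
      (s ^ (α - 1) • (s • z * deriv h (s • z) + α * h (s • z))) s := by
  have hcomp : HasDerivAt (fun t : ℝ => h (t • z)) (deriv h (s • z) * z) s :=
    hh.hasDerivAt.comp s (by simpa using (hasDerivAt_id' s).smul_const z)
  refine ((Real.hasDerivAt_rpow_const (p := α) (Or.inl hs)).smul hcomp).congr_deriv ?_
  have hs' : (s : ℂ) ≠ 0 := by exact_mod_cast hs
  simp only [Complex.real_smul]
  rw [Real.rpow_sub_one hs]
  push_cast
  field_simp

theorem norm_le_div_of_norm_mul_deriv_add_le {h : ℂ → ℂ} {r α K : ℝ} (hα : 0 < α)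
    (hh : DifferentiableOn ℂ h (ball 0 r))
    (hK : ∀ w ∈ ball (0 : ℂ) r, ‖w * deriv h w + α * h w‖ ≤ K)
    {z : ℂ} (hz : z ∈ ball 0 r) : ‖h z‖ ≤ K / α := by
  set k : ℂ → ℂ := fun w => w * deriv h w + α * h w
  set G : ℝ → ℂ := fun s => s ^ α • h (s • z)
  have hseg : ∀ s ∈ Icc (0 : ℝ) 1, s • z ∈ ball (0 : ℂ) r := fun s hs =>
    (convex_ball 0 r).smul_mem_of_zero_mem (mem_ball_self (pos_of_mem_ball hz)) hz hs
  have hG : ∀ s ∈ Ioo (0 : ℝ) 1, HasDerivAt G (s ^ (α - 1) • k (s • z)) s := fun s hs =>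
    hasDerivAt_rpow_smul_comp_smul hs.1.ne'
      (hh.differentiableAt (isOpen_ball.mem_nhds (hseg s (Ioo_subset_Icc_self hs))))
  have hk : ContinuousOn k (ball 0 r) :=
    (continuousOn_id.mul ((hh.analyticOnNhd isOpen_ball).deriv.continuousOn)).add
      (continuousOn_const.mul hh.continuousOn)
  have hG_cont : ContinuousOn G (Icc 0 1) :=
    (continuous_id.rpow_const fun _ => Or.inr hα.le).continuousOn.smul
      (hh.continuousOn.comp (continuous_id.smul continuous_const).continuousOn hseg)
  have hG'_int : IntervalIntegrable (fun s : ℝ => s ^ (α - 1) • k (s • z))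
      MeasureTheory.volume 0 1 :=
    (intervalIntegral.intervalIntegrable_rpow' (by linarith)).smul_continuousOn
      (hk.comp (continuous_id.smul continuous_const).continuousOn
        (by rw [uIcc_of_le zero_le_one]; exact hseg))
  have hG'_le : ∀ s ∈ Ioc (0 : ℝ) 1, ‖s ^ (α - 1) • k (s • z)‖ ≤ K * s ^ (α - 1) := by
    intro s hs
    rw [norm_smul, Real.norm_of_nonneg (Real.rpow_nonneg hs.1.le _), mul_comm]
    exact mul_le_mul_of_nonneg_right (hK _ (hseg s (Ioc_subset_Icc_self hs)))
      (Real.rpow_nonneg hs.1.le _)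
  calc ‖h z‖ = ‖∫ s in (0 : ℝ)..1, s ^ (α - 1) • k (s • z)‖ := by
        rw [intervalIntegral.integral_eq_sub_of_hasDerivAt_of_le zero_le_one hG_cont hG hG'_int]
        simp [G, Real.zero_rpow hα.ne']
    _ ≤ ∫ s in (0 : ℝ)..1, K * s ^ (α - 1) :=
        intervalIntegral.norm_integral_le_of_norm_le zero_le_one (Eventually.of_forall hG'_le)
          ((intervalIntegral.intervalIntegrable_rpow' (by linarith)).const_mul K)
    _ = K / α := by
        rw [intervalIntegral.integral_const_mul, integral_rpow (Or.inl (by linarith))]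
        simp [Real.zero_rpow hα.ne', div_eq_mul_inv]

theorem norm_le_of_continuousAt_of_forall_ne {E : Type*} [NormedAddCommGroup E] {f : ℂ → E}
    {c : ℂ} {K : ℝ} (hf : ContinuousAt f c) {s : Set ℂ} (hs : s ∈ 𝓝 c)
    (h : ∀ z ∈ s, z ≠ c → ‖f z‖ ≤ K) : ‖f c‖ ≤ K := by
  refine le_of_tendsto (hf.norm.tendsto.mono_left (nhdsWithin_le_nhds (s := {c}ᶜ))) ?_
  filter_upwards [self_mem_nhdsWithin, mem_nhdsWithin_of_mem_nhds hs] with z hzc hzs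
  exact h z hzs hzc

theorem norm_deriv_le_of_norm_second_order_le {p : ℂ → ℂ} {r β₁ β₂ M : ℝ}
    (hβ₁ : 0 < β₁) (hβ₂ : 0 < β₂) (hp : AnalyticOnNhd ℂ p (ball 0 r))
    (hM : ∀ w ∈ ball (0 : ℂ) r,
      ‖β₁ * w * deriv p w + β₂ * w ^ 2 * deriv (deriv p) w‖ ≤ M * ‖w‖)
    {z : ℂ} (hz : z ∈ ball 0 r) : ‖deriv p z‖ ≤ M / β₁ := by
  set α := β₁ / β₂
  have hp' : AnalyticOnNhd ℂ (deriv p) (ball 0 r) := hp.deriv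
  have hk_ne : ∀ w ∈ ball (0 : ℂ) r, w ≠ 0 →
      ‖w * deriv (deriv p) w + α * deriv p w‖ ≤ M / β₂ := by
    intro w hw hw0
    have hβ₂' : (β₂ : ℂ) ≠ 0 := by exact_mod_cast hβ₂.ne'
    have hfactor : β₁ * w * deriv p w + β₂ * w ^ 2 * deriv (deriv p) w
        = β₂ * w * (w * deriv (deriv p) w + α * deriv p w) := by
      simp only [α]
      push_cast
      field_simp
      ring
    have := hM w hw
    rw [hfactor, norm_mul, norm_mul, Complex.norm_real, Real.norm_of_nonneg hβ₂.le] at this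
    rw [le_div_iff₀ hβ₂]
    nlinarith [norm_pos_iff.2 hw0]
  have hk : ∀ w ∈ ball (0 : ℂ) r, ‖w * deriv (deriv p) w + α * deriv p w‖ ≤ M / β₂ := by
    intro w hw
    rcases eq_or_ne w 0 with rfl | hw0
    · refine norm_le_of_continuousAt_of_forall_ne
        (f := fun w => w * deriv (deriv p) w + α * deriv p w) ?_ (isOpen_ball.mem_nhds hw) hk_ne
      exact (continuousAt_id.mul (hp'.deriv 0 hw).continuousAt).add
        (continuousAt_const.mul (hp' 0 hw).continuousAt)
    · exact hk_ne w hw hw0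
  simpa [α, div_div_div_cancel_right₀ hβ₂.ne'] using
    norm_le_div_of_norm_mul_deriv_add_le (div_pos hβ₁ hβ₂) hp'.differentiableOn hk hz

theorem norm_sub_le_of_norm_second_order_le {p : ℂ → ℂ} {β₁ β₂ M : ℝ}
    (hβ₁ : 0 < β₁) (hβ₂ : 0 < β₂) (hp : AnalyticOnNhd ℂ p (ball 0 1))
    (hM : ∀ w ∈ ball (0 : ℂ) 1, ‖β₁ * w * deriv p w + β₂ * w ^ 2 * deriv (deriv p) w‖ ≤ M)
    {z : ℂ} (hz : z ∈ ball 0 1) : ‖p z - p 0‖ ≤ M / β₁ * ‖z‖ := by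
  set q : ℂ → ℂ := fun w => β₁ * w * deriv p w + β₂ * w ^ 2 * deriv (deriv p) w
  have hq : DifferentiableOn ℂ q (ball 0 1) := by
    have := hp.deriv.differentiableOn
    have := hp.deriv.deriv.differentiableOn
    fun_prop
  have hq_le : ∀ w ∈ ball (0 : ℂ) 1, ‖q w‖ ≤ M * ‖w‖ := fun w hw => by
    simpa [q] using Complex.dist_le_div_mul_dist_of_mapsTo_ball hq
      (fun u hu => by simpa [q] using hM u hu) hw
  simpa using (convex_ball (0 : ℂ) 1).norm_image_sub_le_of_norm_deriv_le
    (fun w hw => (hp w hw).differentiableAt)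
    (fun w hw => norm_deriv_le_of_norm_second_order_le hβ₁ hβ₂ hp hq_le hw)
    (mem_ball_self one_pos) hz

theorem stmt9 (β₁ β₂ : ℝ) (hβ₁ : 0 < β₁) (hβ₂ : 0 < β₂)
    (C D : ℝ) (hD : -1 < D) (hDC : D < C) (hC : C ≤ 1)
    (hcond : (2 * β₁ - β₂) * (1 - D ^ 2) ≥ 2 * Real.sqrt 2 * ((C - D) * (1 + |D|)))
    (p : ℂ → ℂ) (hp : AnalyticOnNhd ℂ p (ball 0 1)) (hp0 : p 0 = 1)
    (hsub : ∀ z ∈ ball (0 : ℂ) 1,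
      ‖(1 + (β₁ : ℂ) * z * deriv p z + (β₂ : ℂ) * z ^ 2 * deriv (deriv p) z) - (((1 - C * D) / (1 - D ^ 2) : ℝ) : ℂ)‖ < (C - D) / (1 - D ^ 2)) :
    ∀ z ∈ ball (0 : ℂ) 1, ∃ w ∈ ball (0 : ℂ) 1, p z = 1 + Complex.log (w + (1 + w ^ 2) ^ ((1 : ℂ) / 2)) := by
  intro z hz
  set R := (C - D) / (1 - D ^ 2) * (1 + |D|)
  have hq : ∀ w ∈ ball (0 : ℂ) 1,
      ‖β₁ * w * deriv p w + β₂ * w ^ 2 * deriv (deriv p) w‖ ≤ R := fun w hw => by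
    simpa [add_assoc] using (norm_sub_one_lt_of_norm_sub_janowski_center_lt (hsub w hw)).le
  have hR₀ : 0 ≤ R := (norm_nonneg _).trans (hq 0 (mem_ball_self one_pos))
  have hpz : ‖p z - 1‖ ≤ 3 / 4 :=
    calc ‖p z - 1‖ ≤ R / β₁ * ‖z‖ := by
          simpa [hp0] using norm_sub_le_of_norm_second_order_le hβ₁ hβ₂ hp hq hz
      _ ≤ R / β₁ := mul_le_of_le_one_right (by positivity) (mem_ball_zero_iff.1 hz).le
      _ ≤ 3 / 4 := janowski_radius_div_le hβ₁ hβ₂ hD hDC hC hcond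
  obtain ⟨w, hw, hwv⟩ := Complex.exists_mem_ball_arsinh_eq hpz
  exact ⟨w, hw, by rw [← Complex.arsinh, hwv]; ring⟩
end

section
/- Let β₁, β₂ > 0 be real numbers satisfying 2β₁ − β₂ ≥ 2√2·r₀, where r₀ ≈ 0.546302 is the unique positive root of r² + 2·cot(1)·r − 1 = 0. Let p be analytic on the open unit disk 𝔻 with p(0) = 1, and suppose that for every z ∈ 𝔻 the value 1 + β₁·z·p′(z) + β₂·z²·p″(z) lies in the set {w ∈ ℂ : w ≠ 0, w ≠ 2, |log(w/(2 − w))| < 1} (principal branch of the complex logarithm). Then for every z ∈ 𝔻, p(z) ∈ {1 + log(w + (1 + w²)^{1/2}) : w ∈ 𝔻}, i.e. p(z) ≺ 1 + sinh⁻¹ z. -/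
/-!
Put `g = 1 + β₁ z p' + β₂ z² p''`. The function `L = log (g / (2 - g))` maps the disk into itself
and fixes `0`, so Schwarz's lemma gives `‖L w‖ ≤ ‖w‖`; since `g - 1 = tanh (L / 2)`, this yields
`‖g w - 1‖ ≤ c ‖w‖` with `c = sinh (1/2) / cos (1/2)`.

Along a ray, `D t = z p' (t z)` satisfies `β₁ D + β₂ t D' = (g (t z) - 1) / t`, and with
`ν = β₁ / β₂` one has `(t ^ ν D)' = t ^ (ν - 1) (β₁ D + β₂ t D') / β₂`. Integrating from `0` gives
`‖D t‖ ≤ c ‖z‖ / β₁`, hence `‖p z - 1‖ ≤ c / β₁`.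

The root `r₀` is `tan (1/2)`, so the hypothesis gives `β₁ ≥ √2 tan (1/2)` and
`‖p z - 1‖ ≤ sinh (1/2) / (√2 sin (1/2)) ≈ 0.77 < arsinh 1`. Then `w = sinh (p z - 1)` lies in the
disk and `p z = 1 + sinh⁻¹ w`.
-/

open Metric Set Filter Topology

namespace Real

theorem convexOn_sinh : ConvexOn ℝ (Ici 0) sinh :=
  MonotoneOn.convexOn_of_deriv (convex_Ici 0) continuous_sinh.continuousOn
    differentiable_sinh.differentiableOn
    (by rw [deriv_sinh, interior_Ici]; exact cosh_strictMonoOn.monotoneOn.mono Ioi_subset_Ici_self)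

theorem sinh_le_mul_of_le {x r : ℝ} (hx : 0 ≤ x) (hxr : x ≤ r) : sinh x ≤ sinh r / r * x := by
  rcases hx.eq_or_lt with rfl | hx
  · simp
  have := convexOn_sinh.secant_mono (a := 0) self_mem_Ici hx.le (hx.le.trans hxr : 0 ≤ r)
    hx.ne' (hx.trans_le hxr).ne' hxr
  simp only [sinh_zero, sub_zero] at this
  rwa [div_le_iff₀ hx] at this

theorem cos_one_half_pos : 0 < cos (1 / 2) :=
  cos_pos_of_mem_Ioo ⟨by linarith [pi_pos], by linarith [pi_gt_three]⟩

theorem sin_one_half_pos : 0 < sin (1 / 2) :=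
  sin_pos_of_pos_of_lt_pi (by norm_num) (by linarith [pi_gt_three])

theorem eq_tan_half_of_sq_add_two_cot_one_mul {r : ℝ} (hr : 0 < r)
    (h : r ^ 2 + 2 * (cos 1 / sin 1) * r - 1 = 0) : r = tan (1 / 2) := by
  have hc := cos_one_half_pos
  have hs := sin_one_half_pos
  have hcot : 0 < cos 1 / sin 1 :=
    div_pos cos_one_pos (sin_pos_of_pos_of_lt_pi one_pos (by linarith [pi_gt_three]))
  have ht : tan (1 / 2) ^ 2 + 2 * (cos 1 / sin 1) * tan (1 / 2) - 1 = 0 := by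
    rw [tan_eq_sin_div_cos, show (1 : ℝ) = 2 * (1 / 2) by norm_num, cos_two_mul, sin_two_mul]
    field_simp
    nlinarith [sin_sq_add_cos_sq (1 / 2 : ℝ)]
  have hprod : (r - tan (1 / 2)) * (r + tan (1 / 2) + 2 * (cos 1 / sin 1)) = 0 := by
    linear_combination h - ht
  have htan : 0 < tan (1 / 2) := by rw [tan_eq_sin_div_cos]; positivity
  rcases mul_eq_zero.1 hprod with h' | h' <;> linarith

theorem sinh_one_mul_sinh_half_lt : sinh 1 * sinh (1 / 2) < √2 * sin (1 / 2) := by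
  have hcosh : cosh 1 < 1.55 := by
    have : (exp 1)⁻¹ < 0.3704 := by
      rw [inv_lt_comm₀ (exp_pos 1) (by norm_num)]; linarith [exp_one_gt_d9]
    rw [cosh_eq, exp_neg]
    linarith [exp_one_lt_d9]
  have hsinh_one : sinh 1 ^ 2 = cosh 1 ^ 2 - 1 := by rw [cosh_sq]; ring
  have hsinh_half : 2 * sinh (1 / 2) ^ 2 = cosh 1 - 1 := by
    rw [show cosh 1 = cosh (2 * (1 / 2)) by norm_num, cosh_two_mul, cosh_sq]
    ring
  have hsin : 1 / 2 - (1 / 2) ^ 3 / 6 < sin (1 / 2) := sin_gt_sub_cube (by norm_num)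
  have hone : 1 ≤ cosh 1 := one_le_cosh 1
  refine lt_of_pow_lt_pow_left₀ 2 (by positivity) ?_
  rw [mul_pow, mul_pow, sq_sqrt zero_le_two]
  nlinarith

theorem sinh_sinh_half_div_lt_one : sinh (sinh (1 / 2) / (√2 * sin (1 / 2))) < 1 := by
  have hden : 0 < √2 * sin (1 / 2) := mul_pos (by positivity) sin_one_half_pos
  have hX0 : 0 ≤ sinh (1 / 2) / (√2 * sin (1 / 2)) :=
    div_nonneg (sinh_nonneg_iff.2 (by norm_num)) hden.le
  have hX : sinh 1 * (sinh (1 / 2) / (√2 * sin (1 / 2))) < 1 := by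
    rw [mul_div_assoc', div_lt_one hden]
    exact sinh_one_mul_sinh_half_lt
  have hX1 : sinh (1 / 2) / (√2 * sin (1 / 2)) ≤ 1 := by
    nlinarith [self_le_sinh_iff.2 (zero_le_one' ℝ)]
  calc sinh (sinh (1 / 2) / (√2 * sin (1 / 2)))
      ≤ sinh 1 / 1 * (sinh (1 / 2) / (√2 * sin (1 / 2))) := sinh_le_mul_of_le hX0 hX1
    _ < 1 := by rwa [div_one]

end Real

namespace Complex

theorem norm_sinh_le_sinh_norm (z : ℂ) : ‖sinh z‖ ≤ Real.sinh ‖z‖ :=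
  (hasSum_sinh z).norm_le_of_bounded (Real.hasSum_sinh ‖z‖) fun n => by
    rw [norm_div, norm_pow, norm_natCast]

theorem cosh_eq_re_im (z : ℂ) :
    cosh z = ↑(Real.cosh z.re * Real.cos z.im) + ↑(Real.sinh z.re * Real.sin z.im) * I := by
  conv_lhs => rw [← re_add_im z]
  rw [cosh_add, cosh_mul_I, sinh_mul_I]
  push_cast
  ring

theorem abs_cos_im_le_norm_cosh (z : ℂ) : |Real.cos z.im| ≤ ‖cosh z‖ := by
  have hsq : ‖cosh z‖ ^ 2 = Real.sinh z.re ^ 2 + Real.cos z.im ^ 2 := by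
    rw [cosh_eq_re_im, Complex.sq_norm, normSq_add_mul_I, mul_pow, mul_pow, Real.cosh_sq]
    nlinarith [Real.sin_sq_add_cos_sq z.im]
  exact abs_le.2 (abs_le_of_sq_le_sq' (by nlinarith [sq_nonneg (Real.sinh z.re)]) (norm_nonneg _))

theorem norm_tanh_le {z : ℂ} {r : ℝ} (hr : r < Real.pi / 2) (hz : ‖z‖ ≤ r) :
    ‖tanh z‖ ≤ Real.sinh r / (r * Real.cos r) * ‖z‖ := by
  have hr0 : 0 ≤ r := (norm_nonneg z).trans hz
  have hcos : 0 < Real.cos r := Real.cos_pos_of_mem_Ioo ⟨by linarith [Real.pi_pos], hr⟩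
  have hcosh : Real.cos r ≤ ‖cosh z‖ :=
    calc Real.cos r ≤ Real.cos |z.im| :=
          Real.cos_le_cos_of_nonneg_of_le_pi (abs_nonneg _) (by linarith [Real.pi_pos])
            ((abs_im_le_norm z).trans hz)
      _ = Real.cos z.im := Real.cos_abs z.im
      _ ≤ ‖cosh z‖ := (le_abs_self _).trans (abs_cos_im_le_norm_cosh z)
  rw [tanh_eq_sinh_div_cosh, norm_div, div_le_iff₀ (hcos.trans_le hcosh)]
  calc ‖sinh z‖ ≤ Real.sinh r / r * ‖z‖ :=
        (norm_sinh_le_sinh_norm z).trans (Real.sinh_le_mul_of_le (norm_nonneg z) hz)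
    _ = Real.sinh r / (r * Real.cos r) * ‖z‖ * Real.cos r := by field_simp
    _ ≤ _ := mul_le_mul_of_nonneg_left hcosh (mul_nonneg (div_nonneg
        (Real.sinh_nonneg_iff.2 hr0) (mul_nonneg hr0 hcos.le)) (norm_nonneg z))

theorem sub_one_eq_tanh_half_of_exp_eq {G L : ℂ} (hG : G ≠ 2) (h : exp L = G / (2 - G)) :
    G - 1 = tanh (L / 2) := by
  have hEG : exp (L / 2) ^ 2 * (2 - G) = G := by
    rw [← exp_nat_mul, show ((2 : ℕ) : ℂ) * (L / 2) = L by push_cast; ring, h,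
      div_mul_cancel₀ _ (sub_ne_zero.2 hG.symm)]
  have hcosh : cosh (L / 2) * (2 * exp (L / 2)) = exp (L / 2) ^ 2 + 1 := by
    rw [cosh, exp_neg]; field_simp
  have hsinh : sinh (L / 2) * (2 * exp (L / 2)) = exp (L / 2) ^ 2 - 1 := by
    rw [sinh, exp_neg]; field_simp
  have hcosh0 : cosh (L / 2) ≠ 0 := by
    rintro h0
    rw [h0, zero_mul] at hcosh
    exact two_ne_zero (by linear_combination -hEG - (2 - G) * hcosh : (2 : ℂ) = 0)
  rw [tanh_eq_sinh_div_cosh, eq_div_iff hcosh0]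
  refine mul_right_cancel₀ (mul_ne_zero two_ne_zero (exp_ne_zero (L / 2))) ?_
  linear_combination (G - 1) * hcosh - hsinh - hEG

theorem mem_slitPlane_of_norm_log_lt_pi {x : ℂ} (hx : x ≠ 0) (h : ‖log x‖ < Real.pi) :
    x ∈ slitPlane := by
  refine mem_slitPlane_iff_arg.2 ⟨fun harg => ?_, hx⟩
  have := abs_im_le_norm (log x)
  rw [log_im, harg, abs_of_pos Real.pi_pos] at this
  linarith

theorem log_sinh_add_cpow_half {q : ℂ} (hq : |q.im| < Real.pi / 2) :
    log (sinh q + (1 + sinh q ^ 2) ^ ((1 : ℂ) / 2)) = q := by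
  have hre : 0 < (cosh q).re := by
    rw [cosh_eq_re_im, add_re, ofReal_re, mul_I_re, ofReal_im, neg_zero, add_zero]
    exact mul_pos (Real.cosh_pos q.re) (Real.cos_pos_of_mem_Ioo (abs_lt.1 hq))
  rw [show 1 + sinh q ^ 2 = cosh q ^ 2 by rw [cosh_sq]; ring, one_div,
    sq_cpow_two_inv hre, sinh_add_cosh, log_exp] <;>
  linarith [abs_lt.1 hq, Real.pi_pos]

theorem exists_mem_ball_log_add_cpow_half_eq {q : ℂ} (hq : Real.sinh ‖q‖ < 1) :
    ∃ w ∈ ball (0 : ℂ) 1, log (w + (1 + w ^ 2) ^ ((1 : ℂ) / 2)) = q :=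
  ⟨sinh q, mem_ball_zero_iff.2 ((norm_sinh_le_sinh_norm q).trans_lt hq),
    log_sinh_add_cpow_half (by
      linarith [abs_im_le_norm q, Real.self_le_sinh_iff.2 (norm_nonneg q), Real.pi_gt_three])⟩

end Complex

open Complex in
theorem norm_sub_one_le_of_norm_log_lt_one {g : ℂ → ℂ} (hg : DifferentiableOn ℂ g (ball 0 1))
    (hg0 : g 0 = 1)
    (hlog : ∀ w ∈ ball (0 : ℂ) 1, g w ≠ 0 ∧ g w ≠ 2 ∧ ‖log (g w / (2 - g w))‖ < 1)
    {w : ℂ} (hw : w ∈ ball (0 : ℂ) 1) :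
    ‖g w - 1‖ ≤ Real.sinh (1 / 2) / Real.cos (1 / 2) * ‖w‖ := by
  set L : ℂ → ℂ := fun w => log (g w / (2 - g w))
  have hL : DifferentiableOn ℂ L (ball 0 1) := fun v hv => by
    obtain ⟨hv0, hv2, hvlog⟩ := hlog v hv
    have hden : 2 - g v ≠ 0 := sub_ne_zero.2 (Ne.symm hv2)
    have hgv := (hg v hv).differentiableAt (isOpen_ball.mem_nhds hv)
    refine ((hgv.div ((differentiableAt_const 2).sub hgv) hden).clog ?_).differentiableWithinAt
    exact mem_slitPlane_of_norm_log_lt_pi (div_ne_zero hv0 hden)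
      (hvlog.trans (by linarith [Real.pi_gt_three]))
  have hL0 : L 0 = 0 := by norm_num [L, hg0]
  have hSchwarz : ‖L w‖ ≤ ‖w‖ :=
    norm_le_norm_of_mapsTo_ball hL (fun v hv => mem_closedBall_zero_iff.2 (hlog v hv).2.2.le) hL0
      (mem_ball_zero_iff.1 hw)
  obtain ⟨hw0, hw2, -⟩ := hlog w hw
  have hLw : ‖L w / 2‖ ≤ 1 / 2 := by
    rw [norm_div, Complex.norm_two]
    linarith [mem_ball_zero_iff.1 hw]
  rw [sub_one_eq_tanh_half_of_exp_eq hw2 (exp_log (div_ne_zero hw0 (sub_ne_zero.2 hw2.symm)))]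
  calc ‖tanh (L w / 2)‖ ≤ Real.sinh (1 / 2) / (1 / 2 * Real.cos (1 / 2)) * ‖L w / 2‖ :=
        norm_tanh_le (by linarith [Real.pi_gt_three]) hLw
    _ = Real.sinh (1 / 2) / Real.cos (1 / 2) * ‖L w‖ := by
        rw [norm_div, Complex.norm_two]; field_simp
    _ ≤ Real.sinh (1 / 2) / Real.cos (1 / 2) * ‖w‖ := by
        have := Real.cos_one_half_pos
        gcongr

section EulerInequality

variable {E : Type*} [NormedAddCommGroup E] [NormedSpace ℝ E] {D D' : ℝ → E} {a b C T : ℝ}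

theorem norm_rpow_smul_le_add_of_euler_bound (ha : 0 < a) (hb : 0 < b)
    (hD : ContinuousOn D (Icc 0 T)) (hD' : ∀ t ∈ Ioo 0 T, HasDerivAt D (D' t) t)
    (hbound : ∀ t ∈ Ioo 0 T, ‖a • D t + (b * t) • D' t‖ ≤ C) {ε t : ℝ} (hε : 0 < ε) (hεt : ε ≤ t)
    (ht : t ≤ T) :
    ‖t ^ (a / b) • D t‖ ≤ ‖ε ^ (a / b) • D ε‖ + C / a * (t ^ (a / b) - ε ^ (a / b)) := by
  set ν := a / b with hν
  have hν0 : 0 < ν := div_pos ha hb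
  have hIco : Ico ε t ⊆ Ioo 0 T := fun s hs => ⟨hε.trans_le hs.1, hs.2.trans_le ht⟩
  have hψ' : ∀ s ∈ Ioo 0 T, HasDerivAt (fun s => s ^ ν • D s)
      ((s ^ (ν - 1) / b) • (a • D s + (b * s) • D' s)) s := by
    intro s hs
    refine ((Real.hasDerivAt_rpow_const (Or.inl hs.1.ne')).smul (hD' s hs)).congr_deriv ?_
    rw [smul_add, smul_smul, smul_smul, add_comm, Real.rpow_sub_one hs.1.ne']
    congr 2
    · rw [hν]; field_simp
    · field_simp [hs.1.ne']
  have hψ'_le : ∀ s ∈ Ioo 0 T,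
      ‖(s ^ (ν - 1) / b) • (a • D s + (b * s) • D' s)‖ ≤ C / b * s ^ (ν - 1) := by
    intro s hs
    have hpos : 0 ≤ s ^ (ν - 1) / b := div_nonneg (Real.rpow_nonneg hs.1.le _) hb.le
    rw [norm_smul, Real.norm_of_nonneg hpos]
    exact (mul_le_mul_of_nonneg_left (hbound s hs) hpos).trans_eq (by ring)
  refine image_norm_le_of_norm_deriv_right_le_deriv_boundary'
    (((Real.continuous_rpow_const hν0.le).continuousOn.smul hD).mono (Icc_subset_Icc hε.le ht))
    (fun s hs => (hψ' s (hIco hs)).hasDerivWithinAt)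
    (B := fun s => ‖ε ^ ν • D ε‖ + C / a * (s ^ ν - ε ^ ν)) (B' := fun s => C / b * s ^ (ν - 1))
    (by simp) ?_ (fun s hs => ?_) (fun s hs => hψ'_le s (hIco hs)) ⟨hεt, le_rfl⟩
  · exact (continuous_const.add (continuous_const.mul
      ((Real.continuous_rpow_const hν0.le).sub continuous_const))).continuousOn
  · refine ((((Real.hasDerivAt_rpow_const (Or.inl (hIco hs).1.ne')).sub_const _).const_mul
      (C / a)).const_add _).hasDerivWithinAt.congr_deriv ?_
    rw [hν]; field_simp

theorem norm_rpow_smul_le_of_euler_bound (ha : 0 < a) (hb : 0 < b)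
    (hD : ContinuousOn D (Icc 0 T)) (hD' : ∀ t ∈ Ioo 0 T, HasDerivAt D (D' t) t)
    (hbound : ∀ t ∈ Ioo 0 T, ‖a • D t + (b * t) • D' t‖ ≤ C) {t : ℝ} (ht : t ∈ Ioc 0 T) :
    ‖t ^ (a / b) • D t‖ ≤ C / a * t ^ (a / b) := by
  have hν0 : 0 < a / b := div_pos ha hb
  have hrpow : Tendsto (fun ε : ℝ => ε ^ (a / b)) (𝓝[>] 0) (𝓝 0) := by
    simpa [Real.zero_rpow hν0.ne'] using
      ((Real.continuous_rpow_const hν0.le).tendsto 0).mono_left nhdsWithin_le_nhds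
  have hD0 : Tendsto D (𝓝[>] 0) (𝓝 (D 0)) :=
    (hD 0 ⟨le_rfl, ht.1.le.trans ht.2⟩).tendsto.mono_left
      (nhdsWithin_le_of_mem (Icc_mem_nhdsGT (ht.1.trans_le ht.2)))
  have hlim : Tendsto (fun ε => ‖ε ^ (a / b) • D ε‖ + C / a * (t ^ (a / b) - ε ^ (a / b)))
      (𝓝[>] 0) (𝓝 (C / a * t ^ (a / b))) := by
    simpa using (hrpow.smul hD0).norm.add ((tendsto_const_nhds.sub hrpow).const_mul (C / a))
  refine ge_of_tendsto hlim ?_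
  filter_upwards [Ioo_mem_nhdsGT ht.1] with ε hε
  exact norm_rpow_smul_le_add_of_euler_bound ha hb hD hD' hbound hε.1 hε.2.le ht.2

theorem norm_le_of_euler_bound (ha : 0 < a) (hb : 0 < b) (hT : 0 < T)
    (hD : ContinuousOn D (Icc 0 T)) (hD' : ∀ t ∈ Ioo 0 T, HasDerivAt D (D' t) t)
    (hbound : ∀ t ∈ Ioo 0 T, ‖a • D t + (b * t) • D' t‖ ≤ C) {t : ℝ} (ht : t ∈ Icc 0 T) :
    ‖D t‖ ≤ C / a := by
  have hpos : ∀ s ∈ Ioc 0 T, ‖D s‖ ≤ C / a := fun s hs => by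
    have h := norm_rpow_smul_le_of_euler_bound ha hb hD hD' hbound hs
    have hsν : 0 < s ^ (a / b) := Real.rpow_pos_of_pos hs.1 _
    rw [norm_smul, Real.norm_of_nonneg hsν.le, mul_comm] at h
    exact le_of_mul_le_mul_right h hsν
  rcases ht.1.eq_or_lt with rfl | ht0
  · have hD0 := (hD 0 ⟨le_rfl, hT.le⟩).tendsto.mono_left
      (nhdsWithin_le_of_mem (Icc_mem_nhdsGT hT))
    exact le_of_tendsto hD0.norm (by filter_upwards [Ioc_mem_nhdsGT hT] with s hs using hpos s hs)
  · exact hpos t ⟨ht0, ht.2⟩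

end EulerInequality

theorem norm_sub_le_of_norm_euler_le {p : ℂ → ℂ} {β₁ β₂ C : ℝ} (hβ₁ : 0 < β₁) (hβ₂ : 0 < β₂)
    (hp : DifferentiableOn ℂ p (ball 0 1))
    (hbound : ∀ w ∈ ball (0 : ℂ) 1,
      ‖(β₁ : ℂ) * w * deriv p w + (β₂ : ℂ) * w ^ 2 * deriv (deriv p) w‖ ≤ C * ‖w‖)
    {z : ℂ} (hz : z ∈ ball (0 : ℂ) 1) :
    ‖p z - p 0‖ ≤ C / β₁ * ‖z‖ := by
  have hp' : DifferentiableOn ℂ (deriv p) (ball 0 1) :=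
    ((hp.analyticOnNhd isOpen_ball).deriv).differentiableOn
  have hmem : ∀ t ∈ Icc (0 : ℝ) 1, (t : ℂ) * z ∈ ball (0 : ℂ) 1 := fun t ht => by
    rw [mem_ball_zero_iff, norm_mul, Complex.norm_real, Real.norm_of_nonneg ht.1]
    exact (mul_le_of_le_one_left (norm_nonneg z) ht.2).trans_lt (mem_ball_zero_iff.1 hz)
  have hcomp : ∀ {f : ℂ → ℂ}, DifferentiableOn ℂ f (ball 0 1) → ∀ t ∈ Icc (0 : ℝ) 1,
      HasDerivAt (fun s : ℝ => f (s * z)) (z * deriv f (t * z)) t := fun hf t ht => by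
    have hft := (hf _ (hmem t ht)).differentiableAt (isOpen_ball.mem_nhds (hmem t ht))
    simpa [mul_comm] using
      (hft.hasDerivAt.comp (t : ℂ) ((hasDerivAt_id (t : ℂ)).mul_const z)).comp_ofReal
  have hD : ∀ t ∈ Icc (0 : ℝ) 1, ‖z * deriv p (t * z)‖ ≤ C * ‖z‖ / β₁ := fun t ht => by
    have hD' : ∀ s ∈ Icc (0 : ℝ) 1, HasDerivAt (fun s : ℝ => z * deriv p (s * z))
        (z * (z * deriv (deriv p) (s * z))) s := fun s hs => (hcomp hp' s hs).const_mul z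
    refine norm_le_of_euler_bound hβ₁ hβ₂ one_pos
      (fun s hs => (hD' s hs).continuousAt.continuousWithinAt)
      (fun s hs => hD' s (Ioo_subset_Icc_self hs)) (fun s hs => ?_) ht
    have hw := hbound _ (hmem s (Ioo_subset_Icc_self hs))
    rw [show (β₁ : ℂ) * (s * z) * deriv p (s * z) + β₂ * (s * z) ^ 2 * deriv (deriv p) (s * z) =
        s * (β₁ • (z * deriv p (s * z)) + (β₂ * s) • (z * (z * deriv (deriv p) (s * z)))) by
      simp only [Complex.real_smul]; push_cast; ring] at hw
    rw [norm_mul, norm_mul, Complex.norm_real, Real.norm_of_nonneg hs.1.le, mul_left_comm C] at hw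
    exact le_of_mul_le_mul_left hw hs.1
  have := norm_image_sub_le_of_norm_deriv_le_segment_01' (f := fun s : ℝ => p (s * z))
    (fun t ht => (hcomp hp t ht).hasDerivWithinAt) (fun t ht => hD t (Ico_subset_Icc_self ht))
  simpa [mul_comm, div_mul_eq_mul_div] using this

theorem stmt10_general (β₁ β₂ : ℝ) (hβ₂ : 0 < β₂)
    (r₀ : ℝ) (hr₀pos : 0 < r₀)
    (hr₀ : r₀ ^ 2 + 2 * (Real.cos 1 / Real.sin 1) * r₀ - 1 = 0)
    (hcond : (2 * β₁ - β₂) ≥ 2 * Real.sqrt 2 * r₀)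
    (p : ℂ → ℂ) (hp : AnalyticOnNhd ℂ p (ball 0 1)) (hp0 : p 0 = 1)
    (hsub : ∀ z ∈ ball (0 : ℂ) 1,
      (1 + (β₁ : ℂ) * z * deriv p z + (β₂ : ℂ) * z ^ 2 * deriv (deriv p) z) ≠ 0 ∧ (1 + (β₁ : ℂ) * z * deriv p z + (β₂ : ℂ) * z ^ 2 * deriv (deriv p) z) ≠ 2 ∧
        ‖Complex.log ((1 + (β₁ : ℂ) * z * deriv p z + (β₂ : ℂ) * z ^ 2 * deriv (deriv p) z) / (2 - (1 + (β₁ : ℂ) * z * deriv p z + (β₂ : ℂ) * z ^ 2 * deriv (deriv p) z)))‖ < 1) :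
    ∀ z ∈ ball (0 : ℂ) 1, ∃ w ∈ ball (0 : ℂ) 1, p z = 1 + Complex.log (w + (1 + w ^ 2) ^ ((1 : ℂ) / 2)) := by
  intro z hz
  have htan : 0 < Real.tan (1 / 2) :=
    Real.tan_pos_of_pos_of_lt_pi_div_two (by norm_num) (by linarith [Real.pi_gt_three])
  have hβ₁ : √2 * Real.tan (1 / 2) ≤ β₁ := by
    rw [← Real.eq_tan_half_of_sq_add_two_cot_one_mul hr₀pos hr₀]; linarith
  have hβ₁pos : 0 < β₁ := lt_of_lt_of_le (by positivity) hβ₁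
  have hg : DifferentiableOn ℂ (fun w => 1 + (β₁ : ℂ) * w * deriv p w +
      (β₂ : ℂ) * w ^ 2 * deriv (deriv p) w) (ball 0 1) := by
    have hp' : DifferentiableOn ℂ (deriv p) (ball 0 1) := hp.deriv.differentiableOn
    have hp'' : DifferentiableOn ℂ (deriv (deriv p)) (ball 0 1) := hp.deriv.deriv.differentiableOn
    fun_prop
  have hq : ‖p z - 1‖ ≤ Real.sinh (1 / 2) / (√2 * Real.sin (1 / 2)) := by
    have h := norm_sub_le_of_norm_euler_le hβ₁pos hβ₂ hp.differentiableOn (fun w hw => by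
        have h := norm_sub_one_le_of_norm_log_lt_one hg (by simp) hsub hw
        rwa [add_assoc, add_sub_cancel_left] at h) hz
    have := Real.cos_one_half_pos
    rw [hp0] at h
    calc ‖p z - 1‖ ≤ Real.sinh (1 / 2) / Real.cos (1 / 2) / β₁ * 1 :=
          h.trans (by gcongr; exact (mem_ball_zero_iff.1 hz).le)
      _ ≤ Real.sinh (1 / 2) / Real.cos (1 / 2) / (√2 * Real.tan (1 / 2)) := by
          rw [mul_one]; gcongr
      _ = _ := by rw [Real.tan_eq_sin_div_cos]; field_simp
  obtain ⟨w, hw, hlog⟩ := Complex.exists_mem_ball_log_add_cpow_half_eq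
    ((Real.sinh_le_sinh.2 hq).trans_lt Real.sinh_sinh_half_div_lt_one)
  exact ⟨w, hw, by rw [hlog]; ring⟩

theorem stmt10 (β₁ β₂ : ℝ) (hβ₁ : 0 < β₁) (hβ₂ : 0 < β₂)
    (r₀ : ℝ) (hr₀pos : 0 < r₀)
    (hr₀ : r₀ ^ 2 + 2 * (Real.cos 1 / Real.sin 1) * r₀ - 1 = 0)
    (hcond : (2 * β₁ - β₂) ≥ 2 * Real.sqrt 2 * r₀)
    (p : ℂ → ℂ) (hp : AnalyticOnNhd ℂ p (ball 0 1)) (hp0 : p 0 = 1)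
    (hsub : ∀ z ∈ ball (0 : ℂ) 1,
      (1 + (β₁ : ℂ) * z * deriv p z + (β₂ : ℂ) * z ^ 2 * deriv (deriv p) z) ≠ 0 ∧ (1 + (β₁ : ℂ) * z * deriv p z + (β₂ : ℂ) * z ^ 2 * deriv (deriv p) z) ≠ 2 ∧
        ‖Complex.log ((1 + (β₁ : ℂ) * z * deriv p z + (β₂ : ℂ) * z ^ 2 * deriv (deriv p) z) / (2 - (1 + (β₁ : ℂ) * z * deriv p z + (β₂ : ℂ) * z ^ 2 * deriv (deriv p) z)))‖ < 1) :
    ∀ z ∈ ball (0 : ℂ) 1, ∃ w ∈ ball (0 : ℂ) 1, p z = 1 + Complex.log (w + (1 + w ^ 2) ^ ((1 : ℂ) / 2)) :=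
  stmt10_general β₁ β₂ hβ₂ r₀ hr₀pos hr₀ hcond p hp hp0 hsub
end
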